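/- arXiv:2603.00896 — 3 statements merged into one kernel-verified Lean document; each statement's English description precedes it below -/
import Mathlib

section
/- If a pre-Coxeter system S for a Coxeter matrix M on a group G satisfies the exchange property, then the underlying group homomorphism S.hom : M.Group →* G is injective (and hence an isomorphism, making G a Coxeter group with matrix M). -/
/-!
Matsumoto's argument. Two reduced words with the same image have the same product in the Coxeter
group: by induction on the length it suffices to treat words starting with letters `b ≠ b'`, and
exchanging the first letter of each word into the other one lengthens their alternating prefixes
`b b' b ⋯` and `b' b b' ⋯` until an exchange deletes a letter inside such a prefix. Then the two
alternating words of some length `m` have the same image, so `(s b * s b') ^ m = 1` in `G`, hence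
`M b b' ∣ m`, and the corresponding braid relation holds in the Coxeter group. Since every word
has, again by the exchange property, the same product as a reduced word, `S.hom` is injective.
-/

variable {B : Type*} (M : CoxeterMatrix B) (G : Type*) [Group G]

/-- A *pre-Coxeter system* for a Coxeter matrix `M` on a group `G`: a surjective group
homomorphism from the Coxeter group of `M` to `G` such that `M i j` is the order of
the product of the images of the `i`-th and `j`-th simple generators, and such that no
simple generator is sent to the identity. -/
structure PreCoxeterSystem where
  hom : M.Group →* G
  surjective_hom : Function.Surjective hom
  orderOf_eq (i j : B) : M i j = orderOf (hom (M.simple i) * hom (M.simple j))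
  hom_simple_ne_one (i : B) : hom (M.simple i) ≠ 1

namespace PreCoxeterSystem

variable {M G} (S : PreCoxeterSystem M G)

/-- The length of an element `g : G` is the minimal Coxeter length among the preimages of
`g` under `S.hom`; equivalently, the minimal length of a word of generators expressing `g`. -/
noncomputable def length (g : G) : ℕ :=
  sInf (M.toCoxeterSystem.length '' (S.hom ⁻¹' {g}))

/-- A word of generators is *reduced* if the length of its image in `G` equals the length
of the word. -/
def IsReduced (ω : List B) : Prop :=
  S.length (S.hom (M.toCoxeterSystem.wordProd ω)) = ω.length

/-- The *exchange property* for a pre-Coxeter system: if a word of generators `ω = s₁⋯sₖ` is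
reduced and multiplying on the left by a generator `b` does not increase the length, then
there exists `i < k` such that the image of `b :: ω` equals the image of `ω` with its
`i`-th letter erased. -/
def ExchangeProperty : Prop :=
  ∀ (ω : List B), S.IsReduced ω → ∀ b : B,
    S.length (S.hom (M.toCoxeterSystem.wordProd (b :: ω))) ≤ ω.length →
      ∃ i < ω.length,
        S.hom (M.toCoxeterSystem.wordProd (b :: ω)) =
          S.hom (M.toCoxeterSystem.wordProd (ω.eraseIdx i))

end PreCoxeterSystem

/-- Unlike `CoxeterSystem.alternatingWord`, which ends with its second argument, this alternating
word starts with its first one. -/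
def List.alternating {α : Type*} (x y : α) : ℕ → List α
  | 0 => []
  | n + 1 => x :: List.alternating y x n

namespace List

variable {α : Type*}

@[simp]
theorem length_alternating (x y : α) (n : ℕ) : (alternating x y n).length = n := by
  induction n generalizing x y with
  | zero => rfl
  | succ n ih => simp [alternating, ih]

theorem take_alternating {m n : ℕ} (h : m ≤ n) (x y : α) :
    (alternating x y n).take m = alternating x y m := by
  induction m generalizing n x y with
  | zero => rfl
  | succ m ih =>
    obtain ⟨n, rfl⟩ := Nat.exists_eq_add_of_lt h
    simp [alternating, ih (by omega : m ≤ m + n)]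

theorem exists_eq_cons_of_take_eq_alternating {l : List α} {x y : α} {n : ℕ} (hn : 0 < n)
    (h : l.take n = alternating x y n) : ∃ t, l = x :: t := by
  obtain ⟨n, rfl⟩ := Nat.exists_eq_add_of_lt hn
  cases l with
  | nil => simp [alternating] at h
  | cons a t => simp_all [alternating]

end List

namespace CoxeterSystem

variable {M} {W : Type*} [Group W] (cs : CoxeterSystem M W)

theorem wordProd_alternating_mul_inv (x y : B) (n : ℕ) :
    cs.wordProd (.alternating x y n) * (cs.wordProd (.alternating y x n))⁻¹
      = (cs.simple x * cs.simple y) ^ n := by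
  induction n generalizing x y with
  | zero => simp [List.alternating]
  | succ n ih =>
    have hsc : cs.simple x * (cs.simple y * cs.simple x) ^ n
        = (cs.simple x * cs.simple y) ^ n * cs.simple x :=
      SemiconjBy.pow_right (by simp [SemiconjBy, mul_assoc]) n
    simp only [List.alternating, wordProd_cons, mul_inv_rev, inv_simple]
    calc cs.simple x * cs.wordProd (.alternating y x n)
          * ((cs.wordProd (.alternating x y n))⁻¹ * cs.simple y)
        = cs.simple x * (cs.wordProd (.alternating y x n)
          * (cs.wordProd (.alternating x y n))⁻¹) * cs.simple y := by group
      _ = (cs.simple x * cs.simple y) ^ (n + 1) := by rw [ih, hsc, pow_succ, mul_assoc]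

end CoxeterSystem

namespace PreCoxeterSystem

variable {M G} (S : PreCoxeterSystem M G)

local notation "cs" => CoxeterMatrix.toCoxeterSystem M

open CoxeterSystem (wordProd_cons wordProd_append simple_mul_simple_self)

theorem hom_simple_mul_hom_wordProd_cons (b : B) (ω : List B) :
    S.hom ((cs).simple b) * S.hom ((cs).wordProd (b :: ω)) = S.hom ((cs).wordProd ω) := by
  rw [wordProd_cons, map_mul, ← mul_assoc, ← map_mul, simple_mul_simple_self, map_one, one_mul]

theorem length_hom_le (w : M.Group) : S.length (S.hom w) ≤ (cs).length w :=
  Nat.sInf_le ⟨w, rfl, rfl⟩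

theorem length_hom_wordProd_le (ω : List B) : S.length (S.hom ((cs).wordProd ω)) ≤ ω.length :=
  (S.length_hom_le _).trans ((cs).length_wordProd_le ω)

theorem exists_length_eq (g : G) : ∃ w, S.hom w = g ∧ (cs).length w = S.length g := by
  obtain ⟨w, rfl⟩ := S.surjective_hom g
  have hne : ((cs).length '' (S.hom ⁻¹' {S.hom w})).Nonempty := ⟨_, w, rfl, rfl⟩
  obtain ⟨w', hw', hl⟩ := Nat.sInf_mem hne
  exact ⟨w', hw', hl⟩

theorem length_hom_simple_mul_le (b : B) (g : G) :
    S.length (S.hom ((cs).simple b) * g) ≤ S.length g + 1 := by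
  obtain ⟨w, rfl, hw⟩ := S.exists_length_eq g
  calc S.length (S.hom ((cs).simple b) * S.hom w)
      ≤ (cs).length ((cs).simple b * w) := by rw [← map_mul]; exact S.length_hom_le _
    _ ≤ (cs).length w + 1 :=
        ((cs).length_mul_le _ _).trans_eq (by rw [(cs).length_simple, add_comm])
    _ = S.length (S.hom w) + 1 := by rw [hw]

variable {S}

theorem IsReduced.length_eq {ω ω' : List B} (hω : S.IsReduced ω) (hω' : S.IsReduced ω')
    (h : S.hom ((cs).wordProd ω) = S.hom ((cs).wordProd ω')) : ω.length = ω'.length := by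
  rw [← hω, ← hω', h]

theorem IsReduced.of_hom_eq {ω ω' : List B} (hω : S.IsReduced ω)
    (h : S.hom ((cs).wordProd ω') = S.hom ((cs).wordProd ω)) (hl : ω'.length = ω.length) :
    S.IsReduced ω' := by
  rw [IsReduced, h, hω, hl]

theorem IsReduced.of_cons {b : B} {ω : List B} (h : S.IsReduced (b :: ω)) : S.IsReduced ω := by
  have hle := S.length_hom_simple_mul_le b (S.hom ((cs).wordProd ω))
  rw [← map_mul, ← wordProd_cons, h, List.length_cons] at hle
  exact le_antisymm (S.length_hom_wordProd_le ω) (by omega)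

theorem hom_wordProd_cons_eraseIdx {b : B} {ν : List B} {i : ℕ}
    (hex : S.hom ((cs).wordProd (b :: ν)) = S.hom ((cs).wordProd (ν.eraseIdx i))) :
    S.hom ((cs).wordProd (b :: ν.eraseIdx i)) = S.hom ((cs).wordProd ν) := by
  rw [wordProd_cons, map_mul, ← hex, S.hom_simple_mul_hom_wordProd_cons]

theorem IsReduced.cons_eraseIdx {b : B} {ν : List B} {i : ℕ} (hν : S.IsReduced ν)
    (hi : i < ν.length)
    (hex : S.hom ((cs).wordProd (b :: ν)) = S.hom ((cs).wordProd (ν.eraseIdx i))) :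
    S.IsReduced (b :: ν.eraseIdx i) :=
  hν.of_hom_eq (hom_wordProd_cons_eraseIdx hex) (List.length_eraseIdx_add_one hi)

variable (S)

/-- The quotient of the two alternating words is `(s b * s b') ^ n`, and `M b b'` divides `n`
since it is the order of the image of `s b * s b'`. -/
theorem wordProd_alternating_eq_of_hom_eq {b b' : B} {n : ℕ}
    (h : S.hom ((cs).wordProd (.alternating b b' n)) =
      S.hom ((cs).wordProd (.alternating b' b n))) :
    (cs).wordProd (.alternating b b' n) = (cs).wordProd (.alternating b' b n) := by
  have hpow : (S.hom ((cs).simple b) * S.hom ((cs).simple b')) ^ n = 1 := by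
    rw [← map_mul, ← map_pow, ← (cs).wordProd_alternating_mul_inv, map_mul, map_inv, h,
      mul_inv_cancel]
  obtain ⟨c, rfl⟩ : M b b' ∣ n := by
    rw [S.orderOf_eq]
    exact orderOf_dvd_of_pow_eq_one (by simpa using hpow)
  rw [← mul_inv_eq_one, (cs).wordProd_alternating_mul_inv, pow_mul,
    (cs).simple_mul_simple_pow, one_pow]

/-- An exchange that deletes a letter of an alternating prefix `b' b b' ⋯` is a braid move. -/
theorem wordProd_eq_cons_eraseIdx_of_lt {b b' : B} {ν : List B} {i j : ℕ}
    (hν : ν.take j = .alternating b' b j) (hij : i < j)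
    (hex : S.hom ((cs).wordProd (b :: ν)) = S.hom ((cs).wordProd (ν.eraseIdx i))) :
    (cs).wordProd ν = (cs).wordProd (b :: ν.eraseIdx i) := by
  have htake : ∀ m ≤ j, ν.take m = .alternating b' b m := fun m hm => by
    rw [← List.take_alternating hm, ← hν, List.take_take, min_eq_left hm]
  have herase : ν.eraseIdx i = .alternating b' b i ++ ν.drop (i + 1) := by
    rw [List.eraseIdx_eq_take_drop_succ, htake i hij.le]
  have hsplit : ν = .alternating b' b (i + 1) ++ ν.drop (i + 1) := by
    rw [← htake (i + 1) hij, List.take_append_drop]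
  generalize ν.drop (i + 1) = τ at herase hsplit
  subst hsplit
  rw [herase, ← List.cons_append, wordProd_append, wordProd_append,
    map_mul, map_mul, mul_left_inj] at hex
  rw [herase, ← List.cons_append, wordProd_append, wordProd_append]
  congr 1
  refine S.wordProd_alternating_eq_of_hom_eq (Eq.symm ?_)
  rw [List.alternating, wordProd_cons, map_mul, ← hex,
    S.hom_simple_mul_hom_wordProd_cons]

/-- Exchanging the first letter `b` of `μ` into `ν` either identifies the two products or
produces a word equal to `μ` whose alternating prefix is one letter longer than that of `ν`. -/
theorem exists_take_succ_eq_alternating_of_exchange (hex : S.ExchangeProperty) {n : ℕ}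
    (ih : ∀ ω ω' : List B, ω.length < n → S.IsReduced ω → S.IsReduced ω' →
      S.hom ((cs).wordProd ω) = S.hom ((cs).wordProd ω') → (cs).wordProd ω = (cs).wordProd ω')
    {b b' : B} {μ ν : List B} {j : ℕ} (hj : 0 < j) (hμn : μ.length ≤ n) (hμ : S.IsReduced μ)
    (hν : S.IsReduced ν) (h : S.hom ((cs).wordProd μ) = S.hom ((cs).wordProd ν))
    (hμj : μ.take j = .alternating b b' j) (hνj : ν.take j = .alternating b' b j) :
    ∃ ν₁, S.IsReduced ν₁ ∧ (cs).wordProd ν₁ = (cs).wordProd μ ∧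
      ((cs).wordProd ν = (cs).wordProd μ ∨ ν₁.take (j + 1) = .alternating b b' (j + 1)) := by
  have hlen : μ.length = ν.length := hμ.length_eq hν h
  obtain ⟨α, rfl⟩ := List.exists_eq_cons_of_take_eq_alternating hj hμj
  have hle : S.length (S.hom ((cs).wordProd (b :: ν))) ≤ ν.length := by
    rw [wordProd_cons, map_mul, ← h, S.hom_simple_mul_hom_wordProd_cons, ← hlen]
    exact (S.length_hom_wordProd_le α).trans (Nat.le_succ _)
  obtain ⟨i, hi, hexi⟩ := hex ν hν b hle
  have hred := hν.cons_eraseIdx hi hexi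
  have hprod : (cs).wordProd (b :: ν.eraseIdx i) = (cs).wordProd (b :: α) := by
    rw [wordProd_cons, wordProd_cons]
    refine congrArg _ (ih _ _ ?_ hred.of_cons hμ.of_cons ?_)
    · simp only [List.length_cons] at hlen hμn
      rw [List.length_eraseIdx_of_lt hi]
      omega
    · simpa [wordProd_cons] using (hom_wordProd_cons_eraseIdx hexi).trans h.symm
  refine ⟨_, hred, hprod, ?_⟩
  rcases lt_or_ge i j with hij | hji
  · exact .inl ((S.wordProd_eq_cons_eraseIdx_of_lt hνj hij hexi).trans hprod)
  · right
    rw [List.take_succ_cons, List.take_eraseIdx_eq_take_of_le _ _ _ hji, hνj]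
    rfl

/-- Each pair of exchanges lengthens both alternating prefixes, and they cannot outgrow the
words. -/
theorem wordProd_eq_of_take_eq_alternating (hex : S.ExchangeProperty) {n : ℕ}
    (ih : ∀ ω ω' : List B, ω.length < n → S.IsReduced ω → S.IsReduced ω' →
      S.hom ((cs).wordProd ω) = S.hom ((cs).wordProd ω') → (cs).wordProd ω = (cs).wordProd ω')
    {b b' : B} {μ ν : List B} {j : ℕ} (hj : 0 < j) (hμn : μ.length ≤ n) (hμ : S.IsReduced μ)
    (hν : S.IsReduced ν) (h : S.hom ((cs).wordProd μ) = S.hom ((cs).wordProd ν))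
    (hμj : μ.take j = .alternating b b' j) (hνj : ν.take j = .alternating b' b j) :
    (cs).wordProd μ = (cs).wordProd ν := by
  have hlen : μ.length = ν.length := hμ.length_eq hν h
  obtain ⟨ν₁, hν₁, hν₁μ, hνμ | hν₁j⟩ :=
    S.exists_take_succ_eq_alternating_of_exchange hex ih hj hμn hμ hν h hμj hνj
  · exact hνμ.symm
  obtain ⟨μ₁, hμ₁, hμ₁ν, hμν | hμ₁j⟩ :=
    S.exists_take_succ_eq_alternating_of_exchange hex ih hj (hlen ▸ hμn) hν hμ h.symm hνj hμj
  · exact hμν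
  have hν₁len : ν₁.length = μ.length := hν₁.length_eq hμ (congrArg S.hom hν₁μ)
  have hjν₁ : j + 1 ≤ ν₁.length := by simpa using congrArg List.length hν₁j
  calc (cs).wordProd μ = (cs).wordProd ν₁ := hν₁μ.symm
    _ = (cs).wordProd μ₁ := wordProd_eq_of_take_eq_alternating hex ih (Nat.succ_pos j)
        (by omega) hν₁ hμ₁ (by rw [hν₁μ, hμ₁ν, h]) hν₁j hμ₁j
    _ = (cs).wordProd ν := hμ₁ν
termination_by μ.length - j

theorem wordProd_eq_of_isReduced (hex : S.ExchangeProperty) {ω ω' : List B}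
    (hω : S.IsReduced ω) (hω' : S.IsReduced ω')
    (h : S.hom ((cs).wordProd ω) = S.hom ((cs).wordProd ω')) :
    (cs).wordProd ω = (cs).wordProd ω' := by
  induction hn : ω.length using Nat.strong_induction_on generalizing ω ω' with
  | _ n ih =>
  have hlen := hω.length_eq hω' h
  rcases ω with _ | ⟨b, α⟩ <;> rcases ω' with _ | ⟨b', α'⟩
  · rfl
  · simp at hlen
  · simp at hlen
  · exact S.wordProd_eq_of_take_eq_alternating hex
      (fun _ _ hlt hr hr' him => ih _ hlt hr hr' him rfl) one_pos hn.le hω hω' h rfl rfl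

theorem exists_isReduced_wordProd_eq (hex : S.ExchangeProperty) (ω : List B) :
    ∃ ω', S.IsReduced ω' ∧ (cs).wordProd ω' = (cs).wordProd ω := by
  induction ω with
  | nil => exact ⟨[], Nat.le_zero.mp (S.length_hom_wordProd_le []), rfl⟩
  | cons b τ ih =>
    obtain ⟨τ', hτ', hτ'τ⟩ := ih
    by_cases hle : S.length (S.hom ((cs).wordProd (b :: τ'))) ≤ τ'.length
    · obtain ⟨i, hi, hexi⟩ := hex τ' hτ' b hle
      have hred := hτ'.cons_eraseIdx hi hexi
      have hprod := S.wordProd_eq_of_isReduced hex hred hτ' (hom_wordProd_cons_eraseIdx hexi)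
      refine ⟨_, hred.of_cons, ?_⟩
      rw [wordProd_cons, ← hτ'τ, ← hprod, wordProd_cons, ← mul_assoc,
        simple_mul_simple_self, one_mul]
    · refine ⟨b :: τ', le_antisymm (S.length_hom_wordProd_le _) (not_le.mp hle), ?_⟩
      rw [wordProd_cons, wordProd_cons, hτ'τ]

/-- if a pre-Coxeter system `S` satisfies the exchange property, then
`S.hom : M.Group →* G` is injective (hence an isomorphism, making `G` a Coxeter group
with matrix `M`). -/
theorem injective_hom_of_exchangeProperty (h : S.ExchangeProperty) :
    Function.Injective S.hom := by
  intro w w' hww'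
  obtain ⟨ω, rfl⟩ := (cs).wordProd_surjective w
  obtain ⟨ω', rfl⟩ := (cs).wordProd_surjective w'
  obtain ⟨ρ, hρ, hρω⟩ := S.exists_isReduced_wordProd_eq h ω
  obtain ⟨ρ', hρ', hρω'⟩ := S.exists_isReduced_wordProd_eq h ω'
  rw [← hρω, ← hρω'] at hww' ⊢
  exact S.wordProd_eq_of_isReduced h hρ hρ' hww'

end PreCoxeterSystem
end

section
/- For any Coxeter matrix M on a set I, the Coxeter group associated to M is also presented as a monoid by the same generators and relations: the kernel congruence of the canonical monoid homomorphism from the free monoid on I to the Coxeter group is the smallest multiplicative congruence on the free monoid containing the relations (s_i s_j)^{M(i,j)} ~ 1 for all i, j in I. -/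
/-!
The relations hold in the Coxeter group, so the kernel congruence contains the congruence they
generate and `freeMonoidToCoxeter` descends to the quotient monoid. Conversely the generators
satisfy the Coxeter relations in the quotient monoid, so the universal property of the Coxeter
group (which holds for monoid targets) yields a homomorphism back. It is a left inverse of the
descended map, as both composites fix the generators; hence the descended map is injective and
the two congruences agree.
-/

variable {I : Type*} (M : CoxeterMatrix I)

/-- The Coxeter relations on the free monoid on `I`: for all `i, j`, the word
`(s_i s_j) ^ M i j` is related to the empty word. -/
inductive CoxeterMonoidRelations : FreeMonoid I → FreeMonoid I → Prop
  | intro (i j : I) :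
      CoxeterMonoidRelations ((FreeMonoid.of i * FreeMonoid.of j) ^ M i j) 1

/-- The canonical monoid homomorphism from the free monoid on `I` to the Coxeter group of
`M`, sending the generator `i` to the simple reflection `s_i`. -/
def freeMonoidToCoxeter : FreeMonoid I →* M.Group :=
  FreeMonoid.lift fun i => M.simple i

@[simp]
theorem freeMonoidToCoxeter_of (i : I) : freeMonoidToCoxeter M (FreeMonoid.of i) = M.simple i :=
  FreeMonoid.lift_eval_of _ i

theorem conGen_coxeterMonoidRelations_le_ker :
    conGen (CoxeterMonoidRelations M) ≤ Con.ker (freeMonoidToCoxeter M) := by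
  rw [Con.conGen_le]
  rintro _ _ ⟨i, j⟩
  rw [Con.ker_rel, map_one, map_pow, map_mul, freeMonoidToCoxeter_of, freeMonoidToCoxeter_of,
    ← M.toCoxeterSystem_simple]
  exact M.toCoxeterSystem.simple_mul_simple_pow i j

theorem isLiftable_conGen_coxeterMonoidRelations_mk' :
    M.IsLiftable fun i => (conGen (CoxeterMonoidRelations M)).mk' (FreeMonoid.of i) := by
  intro i j
  rw [← map_mul, ← map_pow, ← map_one (conGen (CoxeterMonoidRelations M)).mk']
  exact (Con.eq _).mpr (ConGen.Rel.of _ _ (CoxeterMonoidRelations.intro i j))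

def coxeterToConGenQuotient : M.Group →* (conGen (CoxeterMonoidRelations M)).Quotient :=
  M.toCoxeterSystem.lift ⟨_, isLiftable_conGen_coxeterMonoidRelations_mk' M⟩

@[simp]
theorem coxeterToConGenQuotient_simple (i : I) :
    coxeterToConGenQuotient M (M.simple i) =
      (conGen (CoxeterMonoidRelations M)).mk' (FreeMonoid.of i) :=
  M.toCoxeterSystem.lift_apply_simple (isLiftable_conGen_coxeterMonoidRelations_mk' M) i

theorem coxeterToConGenQuotient_comp_lift :
    (coxeterToConGenQuotient M).comp
        ((conGen (CoxeterMonoidRelations M)).lift _ (conGen_coxeterMonoidRelations_le_ker M)) =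
      MonoidHom.id _ :=
  Con.hom_ext <| FreeMonoid.hom_eq fun i => by simp

/-- the Coxeter group of `M` is presented as a monoid by the same generators
and relations: the kernel congruence of the canonical monoid homomorphism
`FreeMonoid I →* M.Group` is the smallest multiplicative congruence on the free monoid
containing the relations `(s_i s_j) ^ M i j ~ 1`. -/
theorem con_ker_freeMonoidToCoxeter :
    Con.ker (freeMonoidToCoxeter M) = conGen (CoxeterMonoidRelations M) :=
  Con.ker_eq_lift_of_injective _ _ (conGen_coxeterMonoidRelations_le_ker M) <|
    Function.LeftInverse.injective (g := coxeterToConGenQuotient M)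
      (DFunLike.congr_fun (coxeterToConGenQuotient_comp_lift M))
end

section
/- If L₁ or L₂ is a linear symmetric list (its underlying list has no duplicates), then there is at most one morphism from L₁ to L₂ in the category of symmetric lists; in particular, the type of morphisms L₁ ⟶ L₂ is a subsingleton. -/
universe u

open CategoryTheory

namespace SListDev

/-- A wrapper around `List C`, serving as the type of objects of the quiver generating
the category of symmetric lists. -/
structure SL (C : Type u) where
  toList : List C

variable {C : Type u}

/-- Consing an element onto a symmetric-list object. -/
def SL.cons (z : C) (a : SL C) : SL C := ⟨z :: a.toList⟩

/-- Generating morphisms for the category of symmetric lists: adjacent swaps and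
cons of a generating morphism. -/
inductive Gen : SL C → SL C → Type u
  | swap (x y : C) (l : List C) : Gen ⟨x :: y :: l⟩ ⟨y :: x :: l⟩
  | cons (z : C) {l l' : List C} : Gen ⟨l⟩ ⟨l'⟩ → Gen ⟨z :: l⟩ ⟨z :: l'⟩

instance : Quiver (SL C) := ⟨Gen⟩

/-- The free category on the generating quiver of symmetric lists. -/
abbrev FreeSL (C : Type u) := Paths (SL C)

/-- The extension of the `cons` operation to paths. -/
def consMap (z : C) : ∀ {a b : SL C}, Quiver.Path a b → Quiver.Path (SL.cons z a) (SL.cons z b)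
  | _, _, Quiver.Path.nil => Quiver.Path.nil
  | _, _, Quiver.Path.cons p g => (consMap z p).cons (Gen.cons z g)

/-- The path consisting of a single swap. -/
def swapPath (x y : C) (l : List C) :
    Quiver.Path (⟨x :: y :: l⟩ : SL C) (⟨y :: x :: l⟩ : SL C) :=
  Quiver.Hom.toPath (Gen.swap x y l)

/-- The relations defining the category of symmetric lists: naturality of the swap,
the symmetry relation, the hexagon (Yang–Baxter) relation, and functoriality
(congruence) of `cons`. -/
inductive Rel : HomRel (FreeSL C)
  | swap_naturality (X Y : C) {l l' : SL C} (f : Quiver.Path l l') :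
      Rel ((swapPath X Y l.toList).comp (consMap Y (consMap X f)))
          ((consMap X (consMap Y f)).comp (swapPath X Y l'.toList))
  | swap_swap (X Y : C) (l : List C) :
      Rel ((swapPath X Y l).comp (swapPath Y X l)) Quiver.Path.nil
  | hexagon (X Y Z : C) (l : List C) :
      Rel ((swapPath X Y (Z :: l)).comp ((consMap Y (swapPath X Z l)).comp
            (swapPath Y Z (X :: l))))
          ((consMap X (swapPath Y Z l)).comp ((swapPath X Z (Y :: l)).comp
            (consMap Z (swapPath X Y l))))
  | cons (z : C) {l l' : SL C} (f f' : Quiver.Path l l') :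
      Rel f f' → Rel (consMap z f) (consMap z f')

end SListDev

/-- The category of symmetric lists on `C`, presented by generators and relations. -/
abbrev SList (C : Type u) := CategoryTheory.Quotient (SListDev.Rel (C := C))

namespace SList

variable {C : Type u}

/-- The symmetric list attached to a list. -/
def mk (l : List C) : SList C := ⟨⟨l⟩⟩

/-- The underlying list of a symmetric list. -/
def toList (L : SList C) : List C := L.as.toList

/-- The length of a symmetric list. -/
def length (L : SList C) : ℕ := L.toList.length

/-- The underlying multiset of a symmetric list. -/
def mult (L : SList C) : Multiset C := (L.toList : Multiset C)

end SList

/-- A symmetric list is *linear* if its underlying list has no duplicates. -/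
def SList.Linear {C : Type u} (L : SList C) : Prop := L.toList.Nodup

/-!
Every morphism out of `a :: t` factors as `consHom a f'` followed by the insertion of the head
`a` at some position of the target: such factorizations exist for the identity and are stable
under composition with each generator (the swap cases are `swap_swap`, naturality and the
hexagon). When the target has no duplicates the insertion position is determined by the
target, so induction on `t` gives uniqueness. A linear source forces a linear target, since
morphisms preserve the underlying multiset.
-/

namespace SListDev

variable {C : Type u}

theorem consMap_comp (z : C) {a b c : SL C} (p : Quiver.Path a b) (q : Quiver.Path b c) :
    consMap z (p.comp q) = (consMap z p).comp (consMap z q) := by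
  induction q with
  | nil => simp [consMap]
  | cons q g ih => simp only [Quiver.Path.comp_cons, consMap, ih]; rfl

theorem Gen.perm : ∀ {X Y : SL C}, Gen X Y → X.toList.Perm Y.toList
  | _, _, .swap x y l => .swap y x l
  | _, _, .cons z g => g.perm.cons z

def consMapFunctor (z : C) : FreeSL C ⥤ FreeSL C where
  obj := SL.cons z
  map := consMap z
  map_id := consMap.eq_1 z
  map_comp := consMap_comp z

end SListDev

namespace SList

open SListDev

variable {C : Type u}

def ofGen {X Y : SL C} (g : Gen X Y) : (⟨X⟩ : SList C) ⟶ ⟨Y⟩ :=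
  (Quotient.functor (Rel (C := C))).map (Quiver.Hom.toPath g)

theorem hom_induction {X : SL C} (P : ∀ {Y : SL C}, ((⟨X⟩ : SList C) ⟶ ⟨Y⟩) → Prop)
    (id : P (𝟙 _))
    (comp : ∀ {Y Z : SL C} (f : (⟨X⟩ : SList C) ⟶ ⟨Y⟩) (g : Gen Y Z), P f → P (f ≫ ofGen g)) :
    ∀ {Y : SL C} (f : (⟨X⟩ : SList C) ⟶ ⟨Y⟩), P f := by
  intro Y f
  obtain ⟨p, rfl⟩ := (Quotient.functor (Rel (C := C))).map_surjective f
  induction p using Paths.induction_fixed_source with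
  | id => exact id
  | comp p g ih => exact comp _ g ih

theorem mult_eq_of_hom {L₁ L₂ : SList C} (f : L₁ ⟶ L₂) : L₁.mult = L₂.mult := by
  obtain ⟨X⟩ := L₁
  obtain ⟨Y⟩ := L₂
  induction f using hom_induction with
  | id => rfl
  | comp f g h => exact h.trans (Multiset.coe_eq_coe.mpr g.perm)

def consFunctor (z : C) : SList C ⥤ SList C :=
  CategoryTheory.Quotient.lift (Rel (C := C))
    (consMapFunctor z ⋙ Quotient.functor (Rel (C := C)))
    (fun _ _ _ _ h => CategoryTheory.Quotient.sound _ (Rel.cons z _ _ h))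

def consHom (z : C) {l l' : List C} (f : mk l ⟶ mk l') : mk (z :: l) ⟶ mk (z :: l') :=
  (consFunctor z).map f

def swapHom (x y : C) (l : List C) : mk (x :: y :: l) ⟶ mk (y :: x :: l) :=
  ofGen (Gen.swap x y l)

theorem consHom_map {l l' : List C} (z : C) (p : Quiver.Path (⟨l⟩ : SL C) ⟨l'⟩) :
    consHom z ((Quotient.functor (Rel (C := C))).map p) =
      (Quotient.functor (Rel (C := C))).map (consMap z p) :=
  rfl

theorem ofGen_swap (x y : C) (l : List C) : ofGen (Gen.swap x y l) = swapHom x y l := rfl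

theorem ofGen_cons (z : C) {l l' : List C} (g : Gen ⟨l⟩ ⟨l'⟩) :
    ofGen (Gen.cons z g) = consHom z (ofGen g) := by
  refine Eq.trans ?_ (consHom_map z (Quiver.Hom.toPath g)).symm
  rw [Quiver.Hom.toPath, consMap, consMap]
  rfl

theorem consHom_id (z : C) (l : List C) : consHom z (𝟙 (mk l)) = 𝟙 (mk (z :: l)) :=
  (consFunctor z).map_id _

theorem consHom_comp (z : C) {l₁ l₂ l₃ : List C} (f : mk l₁ ⟶ mk l₂) (g : mk l₂ ⟶ mk l₃) :
    consHom z (f ≫ g) = consHom z f ≫ consHom z g :=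
  (consFunctor z).map_comp f g

theorem swapHom_swapHom (x y : C) (l : List C) : swapHom x y l ≫ swapHom y x l = 𝟙 _ :=
  ((Quotient.functor (Rel (C := C))).map_comp _ _).symm.trans
    ((CategoryTheory.Quotient.sound _ (Rel.swap_swap x y l)).trans
      ((Quotient.functor (Rel (C := C))).map_id _))

theorem swapHom_naturality (x y : C) {l l' : List C} (f : mk l ⟶ mk l') :
    swapHom x y l ≫ consHom y (consHom x f) = consHom x (consHom y f) ≫ swapHom x y l' := by
  obtain ⟨p, rfl⟩ := (Quotient.functor (Rel (C := C))).map_surjective f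
  exact ((Quotient.functor (Rel (C := C))).map_comp _ _).symm.trans
    ((CategoryTheory.Quotient.sound _ (Rel.swap_naturality x y p)).trans
      ((Quotient.functor (Rel (C := C))).map_comp _ _))

theorem swapHom_hexagon (x y z : C) (l : List C) :
    swapHom x y (z :: l) ≫ consHom y (swapHom x z l) ≫ swapHom y z (x :: l) =
      consHom x (swapHom y z l) ≫ swapHom x z (y :: l) ≫ consHom z (swapHom x y l) := by
  have h := CategoryTheory.Quotient.sound (Rel (C := C)) (Rel.hexagon x y z l)
  erw [Functor.map_comp, Functor.map_comp, Functor.map_comp, Functor.map_comp] at h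
  exact h

def insertHom (a : C) : (pre post : List C) → (mk (a :: (pre ++ post)) ⟶ mk (pre ++ a :: post))
  | [], _ => 𝟙 _
  | b :: pre, post => swapHom a b (pre ++ post) ≫ consHom b (insertHom a pre post)

theorem insertHom_comp_swapHom (a x y : C) (pre post : List C) :
    insertHom a (x :: y :: pre) post ≫ swapHom x y (pre ++ a :: post) =
      consHom a (swapHom x y (pre ++ post)) ≫ insertHom a (y :: x :: pre) post := by
  simp only [insertHom, List.cons_append, consHom_comp, Category.assoc]
  rw [← swapHom_naturality x y (insertHom a pre post),
    reassoc_of% (swapHom_hexagon a x y (pre ++ post))]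

def FactorsThroughInsertHom (a : C) {t w : List C} (f : mk (a :: t) ⟶ mk w) : Prop :=
  ∃ (pre post : List C) (h : pre ++ a :: post = w) (f' : mk t ⟶ mk (pre ++ post)),
    f = consHom a f' ≫ insertHom a pre post ≫ eqToHom (congrArg mk h)

theorem factorsThroughInsertHom_insertHom (a : C) (pre post : List C) :
    FactorsThroughInsertHom a (insertHom a pre post) :=
  ⟨pre, post, rfl, 𝟙 _, by simp [consHom_id]⟩

theorem FactorsThroughInsertHom.consHom_comp {a : C} {s t w : List C} {f : mk (a :: t) ⟶ mk w}
    (hf : FactorsThroughInsertHom a f) (f₀ : mk s ⟶ mk t) :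
    FactorsThroughInsertHom a (consHom a f₀ ≫ f) := by
  obtain ⟨pre, post, h, f', rfl⟩ := hf
  exact ⟨pre, post, h, f₀ ≫ f', by rw [SList.consHom_comp, Category.assoc]⟩

theorem FactorsThroughInsertHom.swapHom_comp_consHom {a z : C} {t w : List C}
    {f : mk (a :: t) ⟶ mk w} (hf : FactorsThroughInsertHom a f) :
    FactorsThroughInsertHom a (swapHom a z t ≫ consHom z f) := by
  obtain ⟨pre, post, rfl, f', rfl⟩ := hf
  refine ⟨z :: pre, post, rfl, consHom z f', ?_⟩
  simp only [insertHom, eqToHom_refl, Category.comp_id, SList.consHom_comp]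
  rw [reassoc_of% (swapHom_naturality a z f')]

theorem FactorsThroughInsertHom.comp_ofGen {a : C} {X Y : SL C} (g : Gen X Y) :
    ∀ {t : List C} {f : mk (a :: t) ⟶ mk X.toList}, FactorsThroughInsertHom a f →
      FactorsThroughInsertHom a (f ≫ ofGen g) := by
  induction g with
  | swap x y l =>
    rintro t f ⟨pre, post, h, f', rfl⟩
    rcases pre with _ | ⟨b, _ | ⟨c, pre⟩⟩ <;>
      simp only [List.nil_append, List.cons_append, List.cons.injEq] at h
    · obtain ⟨rfl, rfl⟩ := h
      exact ⟨[y], l, rfl, f', by simp [insertHom, consHom_id, ofGen_swap]⟩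
    · obtain ⟨rfl, rfl, rfl⟩ := h
      exact ⟨[], b :: post, rfl, f',
        by simp [insertHom, swapHom_swapHom, consHom_id, ofGen_swap]⟩
    · obtain ⟨rfl, rfl, rfl⟩ := h
      exact ⟨c :: b :: pre, post, rfl, f' ≫ swapHom b c (pre ++ post),
        by simp [insertHom_comp_swapHom, SList.consHom_comp, ofGen_swap]⟩
  | @cons z l l' g ih =>
    rintro t f ⟨pre, post, h, f', rfl⟩
    rcases pre with _ | ⟨b, pre⟩ <;>
      simp only [List.nil_append, List.cons_append, List.cons.injEq] at h
    · obtain ⟨rfl, rfl⟩ := h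
      refine ⟨[], _, rfl, f' ≫ ofGen g, ?_⟩
      simp only [insertHom, ofGen_cons, eqToHom_refl, Category.comp_id]
      exact (SList.consHom_comp a f' (ofGen g)).symm
    · obtain ⟨rfl, rfl⟩ := h
      have h := ((ih (factorsThroughInsertHom_insertHom a pre post)).swapHom_comp_consHom
        (z := b)).consHom_comp f'
      convert h using 1
      simp only [insertHom, ofGen_cons, eqToHom_refl, Category.comp_id, Category.assoc]
      exact congrArg _ (congrArg _ (SList.consHom_comp b _ _).symm)

theorem factorsThroughInsertHom (a : C) {t : List C} {Y : SL C} (f : mk (a :: t) ⟶ ⟨Y⟩) :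
    FactorsThroughInsertHom a f := by
  induction f using hom_induction with
  | id => exact factorsThroughInsertHom_insertHom a [] t
  | comp f g hf => exact hf.comp_ofGen g

theorem eq_eqToHom_of_nil {Y : SL C} (f : mk [] ⟶ ⟨Y⟩) :
    ∃ h : [] = Y.toList, f = eqToHom (congrArg mk h) := by
  induction f using hom_induction with
  | id => exact ⟨rfl, rfl⟩
  | @comp Y _ _ g hf =>
    obtain ⟨l⟩ := Y
    obtain rfl : l = [] := hf.1.symm
    nomatch g

theorem subsingleton_hom_of_nodup : ∀ (l : List C) {w : List C}, w.Nodup →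
    Subsingleton (mk l ⟶ mk w)
  | [], _, _ => ⟨fun f g => by
      obtain ⟨_, rfl⟩ := eq_eqToHom_of_nil f
      obtain ⟨_, rfl⟩ := eq_eqToHom_of_nil g
      rfl⟩
  | a :: t, _, hw => ⟨fun f g => by
      obtain ⟨pre, post, rfl, f', rfl⟩ : FactorsThroughInsertHom a f :=
        factorsThroughInsertHom a f
      obtain ⟨pre', post', h, g', rfl⟩ : FactorsThroughInsertHom a g :=
        factorsThroughInsertHom a g
      obtain ⟨ha, hw'⟩ := List.nodup_cons.mp (List.nodup_middle.mp hw)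
      obtain ⟨rfl, -, rfl⟩ := (List.append_cons_inj_of_notMem
        (fun h => ha (List.mem_append_left _ h))
        (fun h => ha (List.mem_append_right _ h))).mp h.symm
      rw [(subsingleton_hom_of_nodup t hw').elim f' g']⟩

theorem Linear.of_hom {L₁ L₂ : SList C} (f : L₁ ⟶ L₂) (h : L₁.Linear) : L₂.Linear := by
  have h' : L₁.mult.Nodup := Multiset.coe_nodup.mpr h
  rw [mult_eq_of_hom f] at h'
  exact Multiset.coe_nodup.mp h'

end SList

/-- If `L₁` or `L₂` is a linear symmetric list, then there is at most one
morphism from `L₁` to `L₂` in the category of symmetric lists. -/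
theorem SList.subsingleton_hom_of_linear {C : Type u} (L₁ L₂ : SList C)
    (h : L₁.Linear ∨ L₂.Linear) : Subsingleton (L₁ ⟶ L₂) := by
  refine ⟨fun f g => ?_⟩
  have h₂ : L₂.Linear := h.elim (Linear.of_hom f) id
  obtain ⟨⟨l₁⟩⟩ := L₁
  obtain ⟨⟨l₂⟩⟩ := L₂
  exact (subsingleton_hom_of_nodup l₁ h₂).elim f g
end
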